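/- Bounded barrier subsolutions for the regularized flow (Heisenberg instance of Lemma 4.1 for the cylinder barrier): Let ψ : [0,∞) → ℝ be defined by ψ(s) = (s−2)³ for 0 ≤ s ≤ 2 and ψ(s) = 0 for s ≥ 2, and let u₀(x,t) = (x₁² + x₂²)/2 + t. There exists a constant C₀ > 0 such that for all δ ∈ (0,1) and all ε > 0 with ε² ≤ δ^{9/2}, the function w^δ(x,t) = ψ(u₀(x,t)) − C₀√δ · t satisfies, for all x ∈ ℝ³ and t > 0, ∂_t w^δ ≤ Σ_{i,j=1}^{3} (δ_{ij} − X_i^ε w^δ · X_j^ε w^δ / (|∇_ε w^δ|² + δ²)) X_i^ε X_j^ε w^δ. -/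

import Mathlib

/-
For fixed `t` the barrier `y ↦ ψ(u₀(y,t)) − C₀√δ t` does not depend on `y₃`, so the frame
sees only the horizontal vector `v = (y₁, y₂, 0)`: its frame gradient is `ψ'(u₀) v` and its frame
Hessian is `ψ''(u₀) v vᵀ + ψ'(u₀) diag(1, 1, 0)`, whatever `ε` is. The regularized operator thus
equals `ψ' + (ψ''|v|² + ψ') δ² / (ψ'²|v|² + δ²)`, while `∂ₜ w^δ = ψ' − C₀√δ`. Where `u₀ < 2` we have
`|v|² < 4`, `ψ' = 3q²`, `ψ'' = −6q` with `q = 2 − u₀`, and the AM–GM inequality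
`4 q s³ ≤ q⁴ + 3 s⁴` (`s = √δ`) bounds the correction term below by `−18√δ`.
-/

open Filter Topology

noncomputable section

/-- Euclidean partial derivative in the `i`-th coordinate direction. -/
def pd (i : Fin 3) (f : (Fin 3 → ℝ) → ℝ) (x : Fin 3 → ℝ) : ℝ :=
  fderiv ℝ f x (Pi.single i 1)

/-- The left-invariant frame `X₁ = ∂₁ - (x₂/2)∂₃`, `X₂ = ∂₂ + (x₁/2)∂₃`, `X₃ = ∂₃`
of the first Heisenberg group. -/
def Xl (i : Fin 3) (f : (Fin 3 → ℝ) → ℝ) (x : Fin 3 → ℝ) : ℝ :=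
  if i = 0 then pd 0 f x - x 1 / 2 * pd 2 f x
  else if i = 1 then pd 1 f x + x 0 / 2 * pd 2 f x
  else pd 2 f x

/-- The Riemannian approximating frame `X₁^ε = X₁`, `X₂^ε = X₂`, `X₃^ε = εX₃`. -/
def Xe (ε : ℝ) (i : Fin 3) (f : (Fin 3 → ℝ) → ℝ) (x : Fin 3 → ℝ) : ℝ :=
  if i = 2 then ε * pd 2 f x else Xl i f x

/-- Squared norm of the approximating gradient `∇_ε f = (X₁f, X₂f, εX₃f)`. -/
def gradESq (ε : ℝ) (f : (Fin 3 → ℝ) → ℝ) (x : Fin 3 → ℝ) : ℝ :=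
  ∑ i : Fin 3, (Xe ε i f x) ^ 2

/-- The regularized operator
`Σ_{i,j=1}^3 (δ_{ij} - X_i^εf X_j^εf/(|∇_εf|² + κ)) X_i^εX_j^ε f`. -/
def regOp (ε κ : ℝ) (f : (Fin 3 → ℝ) → ℝ) (x : Fin 3 → ℝ) : ℝ :=
  ∑ i : Fin 3, ∑ j : Fin 3,
    ((if i = j then (1 : ℝ) else 0) -
        Xe ε i f x * Xe ε j f x / (gradESq ε f x + κ)) *
      Xe ε i (Xe ε j f) x

/-- The cut-off function `ψ(s) = (s−2)³` for `s ≤ 2`, `ψ(s) = 0` for `s ≥ 2`. -/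
def psi (s : ℝ) : ℝ := if s ≤ 2 then (s - 2) ^ 3 else 0

/-- The barrier `w^δ(x,t) = ψ(u₀(x,t)) − C₀ √δ t`, where
`u₀(x,t) = (x₁² + x₂²)/2 + t` is the self-shrinking cylinder function. -/
def barrierW (C₀ δ : ℝ) (x : Fin 3 → ℝ) (t : ℝ) : ℝ :=
  psi ((x 0 ^ 2 + x 1 ^ 2) / 2 + t) - C₀ * Real.sqrt δ * t

lemma hasDerivAt_min_zero_pow {n : ℕ} (hn : 2 ≤ n) (s : ℝ) :
    HasDerivAt (fun y : ℝ => min y 0 ^ n) (n * min s 0 ^ (n - 1)) s := by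
  rcases lt_trichotomy s 0 with hs | rfl | hs
  · have hmin : (fun y : ℝ => min y 0 ^ n) =ᶠ[𝓝 s] fun y => y ^ n := by
      filter_upwards [Iio_mem_nhds hs] with y hy
      rw [min_eq_left (le_of_lt hy)]
    rw [min_eq_left hs.le]
    exact (hasDerivAt_pow n s).congr_of_eventuallyEq hmin
  · have hO : (fun y : ℝ => min y 0 ^ n) =O[𝓝 0] fun y => ‖y - 0‖ ^ n := by
      refine Asymptotics.IsBigO.of_bound 1 (Eventually.of_forall fun y => ?_)
      simp only [norm_pow, Real.norm_eq_abs, sub_zero, one_mul, abs_abs]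
      exact pow_le_pow_left₀ (abs_nonneg _) (abs_min_le_max_abs_abs.trans (by simp)) n
    simpa [show n - 1 ≠ 0 by omega] using (hO.hasFDerivAt (by omega)).hasDerivAt
  · have hmin : (fun y : ℝ => min y 0 ^ n) =ᶠ[𝓝 s] fun _ => 0 := by
      filter_upwards [Ioi_mem_nhds hs] with y hy
      rw [min_eq_right (le_of_lt hy), zero_pow (by omega)]
    rw [min_eq_right hs.le, zero_pow (by omega), mul_zero]
    exact (hasDerivAt_const s 0).congr_of_eventuallyEq hmin

def psi' (s : ℝ) : ℝ := 3 * min (s - 2) 0 ^ 2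

def psi'' (s : ℝ) : ℝ := 6 * min (s - 2) 0

lemma psi_eq_min_pow (s : ℝ) : psi s = min (s - 2) 0 ^ 3 := by
  unfold psi
  split_ifs with hs
  · rw [min_eq_left (by linarith)]
  · rw [min_eq_right (by linarith), zero_pow three_ne_zero]

lemma hasDerivAt_psi (s : ℝ) : HasDerivAt psi (psi' s) s := by
  have h := (hasDerivAt_min_zero_pow (n := 3) (by norm_num) (s - 2)).comp_sub_const s 2
  rw [show psi = fun y => min (y - 2) 0 ^ 3 from funext psi_eq_min_pow, psi']
  norm_num at h ⊢
  exact h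

lemma hasDerivAt_psi' (s : ℝ) : HasDerivAt psi' (psi'' s) s := by
  have h := ((hasDerivAt_min_zero_pow (n := 2) le_rfl (s - 2)).comp_sub_const s 2).const_mul 3
  rw [show psi' = fun y => 3 * min (y - 2) 0 ^ 2 from rfl, psi'']
  norm_num at h ⊢
  exact h.congr_deriv (by ring)

lemma Xe_eq_of_hasFDerivAt {f : (Fin 3 → ℝ) → ℝ} {L : (Fin 3 → ℝ) →L[ℝ] ℝ} {x : Fin 3 → ℝ}
    (hf : HasFDerivAt f L x) (hL : L (Pi.single 2 1) = 0) (ε : ℝ) (i : Fin 3) :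
    Xe ε i f x = ![L (Pi.single 0 1), L (Pi.single 1 1), 0] i := by
  fin_cases i <;> simp [Xe, Xl, pd, hf.fderiv, hL]

def u₀ (x : Fin 3 → ℝ) (t : ℝ) : ℝ := (x 0 ^ 2 + x 1 ^ 2) / 2 + t

lemma hasFDerivAt_u₀ (x : Fin 3 → ℝ) (t : ℝ) :
    HasFDerivAt (fun y => u₀ y t)
      (x 0 • ContinuousLinearMap.proj (R := ℝ) (φ := fun _ : Fin 3 => ℝ) 0 +
        x 1 • ContinuousLinearMap.proj 1) x := by
  have h0 := (hasFDerivAt_apply (𝕜 := ℝ) (F' := fun _ : Fin 3 => ℝ) 0 x).pow 2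
  have h1 := (hasFDerivAt_apply (𝕜 := ℝ) (F' := fun _ : Fin 3 => ℝ) 1 x).pow 2
  refine ((((h0.add h1).mul_const (2⁻¹ : ℝ)).add_const t).congr_of_eventuallyEq
    (.of_forall fun y => rfl)).congr_fderiv ?_
  ext v
  simp
  ring

section CylindricalProfile

variable {g g' g'' : ℝ → ℝ} (ε c t : ℝ)

lemma Xe_cylindrical (hg : ∀ s, HasDerivAt g (g' s) s) (i : Fin 3) :
    Xe ε i (fun y => g (u₀ y t) - c) = fun y => g' (u₀ y t) * ![y 0, y 1, 0] i := by
  funext y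
  have hF : HasFDerivAt (fun y => g (u₀ y t) - c) _ y :=
    ((hg _).comp_hasFDerivAt y (hasFDerivAt_u₀ y t)).sub_const c
  rw [Xe_eq_of_hasFDerivAt hF (by simp)]
  fin_cases i <;> simp

lemma Xe_Xe_cylindrical (hg : ∀ s, HasDerivAt g (g' s) s) (hg' : ∀ s, HasDerivAt g' (g'' s) s)
    (x : Fin 3 → ℝ) (i j : Fin 3) :
    Xe ε i (Xe ε j (fun y => g (u₀ y t) - c)) x =
      g'' (u₀ x t) * ![x 0, x 1, 0] i * ![x 0, x 1, 0] j +
        g' (u₀ x t) * !![1, 0, 0; 0, 1, 0; 0, 0, 0] i j := by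
  let L : (Fin 3 → ℝ) →L[ℝ] ℝ :=
    ![ContinuousLinearMap.proj 0, ContinuousLinearMap.proj 1, 0] j
  have hF : HasFDerivAt (fun y => g' (u₀ y t) * L y) _ x :=
    ((hg' _).comp_hasFDerivAt x (hasFDerivAt_u₀ x t)).mul L.hasFDerivAt
  have hL : ∀ y : Fin 3 → ℝ, ![y 0, y 1, 0] j = L y := by
    intro y; fin_cases j <;> rfl
  simp only [Xe_cylindrical ε c t hg j, hL]
  rw [Xe_eq_of_hasFDerivAt hF (by fin_cases j <;> simp [L])]
  fin_cases i <;> fin_cases j <;> simp [L] <;> ring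

lemma regOp_cylindrical (hg : ∀ s, HasDerivAt g (g' s) s)
    (hg' : ∀ s, HasDerivAt g' (g'' s) s) {κ : ℝ} (hκ : 0 < κ) (x : Fin 3 → ℝ) :
    regOp ε κ (fun y => g (u₀ y t) - c) x =
      g' (u₀ x t) + (g'' (u₀ x t) * (x 0 ^ 2 + x 1 ^ 2) + g' (u₀ x t)) * κ /
        (g' (u₀ x t) ^ 2 * (x 0 ^ 2 + x 1 ^ 2) + κ) := by
  simp only [regOp, gradESq, Fin.sum_univ_three, Xe_Xe_cylindrical ε c t hg hg']
  simp [Xe_cylindrical ε c t hg]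
  field_simp
  ring

end CylindricalProfile

lemma hasDerivAt_barrierW (C₀ δ : ℝ) (x : Fin 3 → ℝ) (t : ℝ) :
    HasDerivAt (barrierW C₀ δ x) (psi' (u₀ x t) - C₀ * Real.sqrt δ) t := by
  have h : HasDerivAt (barrierW C₀ δ x) (psi' (u₀ x t) * 1 - C₀ * Real.sqrt δ * 1) t :=
    ((hasDerivAt_psi (u₀ x t)).comp t ((hasDerivAt_id t).const_add _)).sub
      ((hasDerivAt_id t).const_mul (C₀ * Real.sqrt δ))
  simpa using h

lemma neg_sqrt_le_psi_correction {δ u R : ℝ} (hδ : 0 < δ) (hR : 0 ≤ R) (hRu : R ≤ 2 * u) :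
    -(18 * Real.sqrt δ) ≤ (psi'' u * R + psi' u) * δ ^ 2 / (psi' u ^ 2 * R + δ ^ 2) := by
  rcases le_total 2 u with hu | hu
  · simp [psi', psi'', min_eq_right (sub_nonneg.mpr hu)]
  obtain ⟨q, hq, rfl⟩ : ∃ q, 0 ≤ q ∧ u = 2 - q := ⟨2 - u, by linarith, by ring⟩
  obtain ⟨s, hs, rfl⟩ : ∃ s, 0 < s ∧ δ = s ^ 2 := ⟨Real.sqrt δ, by positivity, by simp [hδ.le]⟩
  simp only [psi', psi'', min_eq_left (by linarith : 2 - q - 2 ≤ 0), Real.sqrt_sq hs.le]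
  rw [le_div_iff₀ (by positivity)]
  have amgm : 4 * q * s ^ 3 ≤ q ^ 4 + 3 * s ^ 4 := by
    nlinarith [mul_nonneg (sq_nonneg (q - s)) (add_nonneg (sq_nonneg (q + s)) (sq_nonneg s))]
  have hR4 : R ≤ 4 := by linarith
  nlinarith [mul_le_mul_of_nonneg_left amgm (mul_nonneg hR hs.le),
    mul_nonneg (sub_nonneg.mpr hR4) (pow_nonneg hs.le 5),
    mul_nonneg (mul_nonneg hR hs.le) (pow_nonneg hq 4), mul_nonneg (sq_nonneg q) (pow_nonneg hs.le 4)]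

/-- Bounded barrier subsolutions for the regularized flow (Heisenberg instance
of Lemma 4.1 for the cylinder barrier). -/
theorem barrier_subsolution :
    ∃ C₀ > (0 : ℝ), ∀ δ ∈ Set.Ioo (0 : ℝ) 1, ∀ ε > (0 : ℝ),
      ε ^ 2 ≤ δ ^ ((9 : ℝ) / 2) →
      ∀ (x : Fin 3 → ℝ) (t : ℝ), 0 < t →
        deriv (barrierW C₀ δ x) t ≤
          regOp ε (δ ^ 2) (fun y => barrierW C₀ δ y t) x := by
  refine ⟨18, by norm_num, ?_⟩
  rintro δ ⟨hδ, -⟩ ε - - x t ht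
  have hR : x 0 ^ 2 + x 1 ^ 2 ≤ 2 * u₀ x t := by rw [u₀]; linarith
  rw [(hasDerivAt_barrierW 18 δ x t).deriv,
    show (fun y => barrierW 18 δ y t) = fun y => psi (u₀ y t) - 18 * Real.sqrt δ * t from rfl,
    regOp_cylindrical ε _ t hasDerivAt_psi hasDerivAt_psi' (by positivity) x]
  linarith [neg_sqrt_le_psi_correction hδ (by positivity) hR]
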